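/- arXiv:1606.09065 — 2 statements merged into one kernel-verified Lean document; each statement's English description precedes it below -/
import Mathlib

section
/- Let S be an incomplete matrix (entries in ℝ ∪ {⊛}) satisfying the sqrt condition. If a completion C of S satisfies PSD rank(C) ≤ 3, then there exists a real matrix Q with Q∘Q = C and rank(Q) ≤ 3. -/
/-!
Take a PSD factorization `C i j = tr (B i * F j)` of size `k = PsdRank C ≤ 3`. For PSD matrices
`tr (B * F) = 0` forces `B * F = 0`, so for a column `j` the sqrt condition, with its rows
`i₁, i₂` and columns `j₁, j₂`, puts the range of `F j` inside `ker (B i₁) ⊓ ker (B i₂)`. This is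
a proper subspace of `ker (B i₁)` (it misses the range of `F j₂`, as `tr (B i₂ * F j₂) = 1`),
which is itself proper (`tr (B i₁ * F j₁) = 1`), so `rank (F j) ≤ k - 2 ≤ 1`; symmetrically
`rank (B i) ≤ 1`. Writing `B i = w i ⊗ w i` and `F j = u j ⊗ u j` gives
`C i j = (w i ⬝ᵥ u j) ^ 2`, and `Q i j = w i ⬝ᵥ u j` factors through `ℝᵏ`.
-/

open Matrix

noncomputable def PsdRank {α β : Type} [Fintype α] [Fintype β] (A : Matrix α β ℝ) : ℕ :=
  sInf {k : ℕ | ∃ (B : α → Matrix (Fin k) (Fin k) ℝ) (C : β → Matrix (Fin k) (Fin k) ℝ),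
    (∀ i, (B i).PosSemidef) ∧ (∀ j, (C j).PosSemidef) ∧ ∀ i j, A i j = ((B i) * (C j)).trace}

/-- An incomplete matrix has entries in `Option ℝ`, with `none` denoting an
unspecified entry `⊛`. The sqrt condition for the matrix (one direction). -/
def SqrtCondOneSide {m n : ℕ} (S : Matrix (Fin m) (Fin n) (Option ℝ)) : Prop :=
  ∀ k : Fin n, ∃ (i₁ i₂ : Fin m) (j₁ j₂ : Fin n),
    S i₁ k = some 0 ∧ S i₁ j₁ = some 1 ∧ S i₁ j₂ = some 0 ∧
    S i₂ k = some 0 ∧ S i₂ j₁ = some 0 ∧ S i₂ j₂ = some 1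

def SqrtCond {m n : ℕ} (S : Matrix (Fin m) (Fin n) (Option ℝ)) : Prop :=
  SqrtCondOneSide S ∧ SqrtCondOneSide S.transpose

def IsCompletion {m n : ℕ} (S : Matrix (Fin m) (Fin n) (Option ℝ))
    (C : Matrix (Fin m) (Fin n) ℝ) : Prop :=
  ∀ i j a, S i j = some a → C i j = a

open Module
open scoped ComplexOrder

theorem LinearMap.finrank_range_add_two_le {K U V W : Type*} [Field K] [AddCommGroup U]
    [Module K U] [AddCommGroup V] [Module K V] [FiniteDimensional K V] [AddCommGroup W]
    [Module K W] {f₀ f₂ : U →ₗ[K] V} {g₁ g₂ : V →ₗ[K] W}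
    (h₁₀ : g₁ ∘ₗ f₀ = 0) (h₂₀ : g₂ ∘ₗ f₀ = 0) (h₁₂ : g₁ ∘ₗ f₂ = 0)
    (hg₁ : g₁ ≠ 0) (h₂₂ : g₂ ∘ₗ f₂ ≠ 0) :
    finrank K (range f₀) + 2 ≤ finrank K V := by
  have h_range : range f₀ ≤ ker g₁ ⊓ ker g₂ :=
    le_inf (range_le_ker_iff.2 h₁₀) (range_le_ker_iff.2 h₂₀)
  have h_inf : ker g₁ ⊓ ker g₂ < ker g₁ := by
    refine inf_le_left.lt_of_ne fun h => h₂₂ (range_le_ker_iff.1 ?_)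
    exact (range_le_ker_iff.2 h₁₂).trans (h ▸ inf_le_right)
  have h_ker : ker g₁ ≠ ⊤ := mt ker_eq_top.1 hg₁
  calc finrank K (range f₀) + 2 ≤ finrank K ↥(ker g₁ ⊓ ker g₂) + 2 := by
        gcongr; exact Submodule.finrank_mono h_range
    _ ≤ finrank K (ker g₁) + 1 := by have := Submodule.finrank_lt_finrank_of_lt h_inf; omega
    _ ≤ finrank K V := Submodule.finrank_lt h_ker

namespace Matrix

theorem rank_add_two_le_of_mul_eq_zero {K l m n : Type*} [Field K] [Fintype m] [Fintype n]
    {C₀ C₂ : Matrix m n K} {B₁ B₂ : Matrix l m K}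
    (h₁₀ : B₁ * C₀ = 0) (h₂₀ : B₂ * C₀ = 0) (h₁₂ : B₁ * C₂ = 0)
    (hB₁ : B₁ ≠ 0) (h₂₂ : B₂ * C₂ ≠ 0) :
    C₀.rank + 2 ≤ Fintype.card m := by
  classical
  have h_comp {M : Matrix l m K} {N : Matrix m n K} (h : M * N = 0) :
      M.mulVecLin ∘ₗ N.mulVecLin = 0 := by
    rw [← mulVecLin_mul, h, mulVecLin_zero]
  have := LinearMap.finrank_range_add_two_le (h_comp h₁₀) (h_comp h₂₀) (h_comp h₁₂)
    (by rwa [← toLin'_apply', map_ne_zero_iff _ toLin'.injective])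
    (by rwa [← mulVecLin_mul, ← toLin'_apply', map_ne_zero_iff _ toLin'.injective])
  rwa [Module.finrank_fintype_fun_eq_card] at this

variable {ι : Type*} [Fintype ι]

theorem PosSemidef.exists_eq_conjTranspose_mul_self {𝕜 : Type*} [RCLike 𝕜] {M : Matrix ι ι 𝕜}
    (hM : M.PosSemidef) : ∃ A : Matrix ι ι 𝕜, M = Aᴴ * A := by
  classical
  open scoped MatrixOrder in
  exact CStarAlgebra.nonneg_iff_eq_star_mul_self.mp hM.nonneg

theorem PosSemidef.mul_eq_zero_of_trace_mul_eq_zero {𝕜 : Type*} [RCLike 𝕜]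
    {B C : Matrix ι ι 𝕜} (hB : B.PosSemidef) (hC : C.PosSemidef) (h : (B * C).trace = 0) :
    B * C = 0 := by
  obtain ⟨A, rfl⟩ := hB.exists_eq_conjTranspose_mul_self
  obtain ⟨D, rfl⟩ := hC.exists_eq_conjTranspose_mul_self
  have hAD : A * Dᴴ = 0 := by
    rw [← trace_conjTranspose_mul_self_eq_zero_iff, ← h, conjTranspose_mul,
      conjTranspose_conjTranspose, Matrix.mul_assoc, trace_mul_comm]
    simp only [Matrix.mul_assoc]
  rw [Matrix.mul_assoc, ← Matrix.mul_assoc A, hAD, Matrix.zero_mul, Matrix.mul_zero]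

theorem exists_eq_vecMulVec_of_rank_le_one {K m n : Type*} [Field K] [Fintype n]
    {A : Matrix m n K} (h : A.rank ≤ 1) : ∃ x : m → K, ∃ y : n → K, A = vecMulVec x y := by
  classical
  obtain ⟨x, hx⟩ := finrank_le_one_iff.1 h
  choose y hy using fun b => hx ⟨A *ᵥ Pi.single b 1, LinearMap.mem_range_self A.mulVecLin _⟩
  refine ⟨x.1, y, ext fun a b => ?_⟩
  simpa [vecMulVec_apply, mul_comm] using (congr_fun (congrArg Subtype.val (hy b)) a).symm

theorem trace_vecMulVec_self_mul_vecMulVec_self {R : Type*} [CommRing R] (w u : ι → R) :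
    (vecMulVec w w * vecMulVec u u).trace = (w ⬝ᵥ u) * (w ⬝ᵥ u) := by
  rw [vecMulVec_mul_vecMulVec, trace_vecMulVec, dotProduct_smul, smul_eq_mul]

theorem PosSemidef.exists_eq_vecMulVec_self_of_rank_le_one {M : Matrix ι ι ℝ}
    (hM : M.PosSemidef) (h : M.rank ≤ 1) : ∃ u : ι → ℝ, M = vecMulVec u u := by
  obtain ⟨A, rfl⟩ := hM.exists_eq_conjTranspose_mul_self
  rw [rank_conjTranspose_mul_self] at h
  obtain ⟨x, y, rfl⟩ := exists_eq_vecMulVec_of_rank_le_one h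
  refine ⟨√(x ⬝ᵥ x) • y, ?_⟩
  have hx : √(x ⬝ᵥ x) * √(x ⬝ᵥ x) = x ⬝ᵥ x :=
    Real.mul_self_sqrt (by simpa using dotProduct_star_self_nonneg x)
  ext a b
  simp only [conjTranspose_vecMulVec, star_trivial, vecMulVec_mul_vecMulVec, vecMulVec_apply,
    Pi.smul_apply, smul_eq_mul]
  linear_combination (-(y a * y b)) * hx

end Matrix

structure IsPsdFactorization {α β ι : Type*} [Fintype ι] (A : Matrix α β ℝ)
    (B : α → Matrix ι ι ℝ) (C : β → Matrix ι ι ℝ) : Prop where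
  posSemidef_left : ∀ i, (B i).PosSemidef
  posSemidef_right : ∀ j, (C j).PosSemidef
  apply_eq : ∀ i j, A i j = (B i * C j).trace

namespace IsPsdFactorization

variable {α β ι : Type*} [Fintype ι] {A : Matrix α β ℝ} {B : α → Matrix ι ι ℝ}
  {C : β → Matrix ι ι ℝ}

theorem transpose (h : IsPsdFactorization A B C) : IsPsdFactorization Aᵀ C B :=
  ⟨h.posSemidef_right, h.posSemidef_left, fun j i => by
    rw [transpose_apply, h.apply_eq, trace_mul_comm]⟩

theorem rank_add_two_le_of_sqrtCondOneSide {m n : ℕ} {S : Matrix (Fin m) (Fin n) (Option ℝ)}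
    {A : Matrix (Fin m) (Fin n) ℝ} {B : Fin m → Matrix ι ι ℝ} {C : Fin n → Matrix ι ι ℝ}
    (h : IsPsdFactorization A B C) (hS : SqrtCondOneSide S) (hA : IsCompletion S A)
    (j : Fin n) : (C j).rank + 2 ≤ Fintype.card ι := by
  obtain ⟨i₁, i₂, j₁, j₂, h₁, h₁₁, h₁₂, h₂, -, h₂₂⟩ := hS j
  have trace_eq {i j a} (hij : S i j = some a) : (B i * C j).trace = a := by
    rw [← h.apply_eq]; exact hA i j a hij
  have mul_eq_zero {i j} (hij : S i j = some 0) : B i * C j = 0 :=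
    (h.posSemidef_left i).mul_eq_zero_of_trace_mul_eq_zero (h.posSemidef_right j) (trace_eq hij)
  have mul_ne_zero {i j} (hij : S i j = some 1) : B i * C j ≠ 0 := fun h₀ => by
    simpa [h₀] using trace_eq hij
  exact rank_add_two_le_of_mul_eq_zero (mul_eq_zero h₁) (mul_eq_zero h₂) (mul_eq_zero h₁₂)
    (fun h₀ => mul_ne_zero h₁₁ (by rw [h₀, Matrix.zero_mul])) (mul_ne_zero h₂₂)

end IsPsdFactorization

theorem IsCompletion.transpose {m n : ℕ} {S : Matrix (Fin m) (Fin n) (Option ℝ)}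
    {C : Matrix (Fin m) (Fin n) ℝ} (h : IsCompletion S C) : IsCompletion Sᵀ Cᵀ :=
  fun j i a => h i j a

theorem exists_isPsdFactorization_psdRank {α β : Type} [Fintype α] [Fintype β]
    {A : Matrix α β ℝ} (hA : ∀ i j, 0 ≤ A i j) :
    ∃ (B : α → Matrix (Fin (PsdRank A)) (Fin (PsdRank A)) ℝ)
      (C : β → Matrix (Fin (PsdRank A)) (Fin (PsdRank A)) ℝ), IsPsdFactorization A B C := by
  classical
  let e := Fintype.equivFin α
  have h_diag : IsPsdFactorization A (fun i => diagonal (Pi.single (e i) 1))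
      (fun j => diagonal fun t => A (e.symm t) j) := by
    refine ⟨fun i => PosSemidef.diagonal fun t => ?_, fun j => PosSemidef.diagonal fun t => hA _ j,
      fun i j => ?_⟩
    · exact Pi.single_nonneg.2 zero_le_one t
    · simp [diagonal_mul_diagonal, trace_diagonal, Pi.single_apply]
  obtain ⟨B, C, hB, hC, hBC⟩ : PsdRank A ∈ _ :=
    Nat.sInf_mem ⟨_, _, _, h_diag.posSemidef_left, h_diag.posSemidef_right, h_diag.apply_eq⟩
  exact ⟨B, C, hB, hC, hBC⟩

theorem sqrt_rank_from_psd_rank_three {m n : ℕ}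
    (S : Matrix (Fin m) (Fin n) (Option ℝ)) (hS : SqrtCond S)
    (C : Matrix (Fin m) (Fin n) ℝ) (hC : IsCompletion S C)
    (hCnonneg : ∀ i j, 0 ≤ C i j) (hpsd : PsdRank C ≤ 3) :
    ∃ Q : Matrix (Fin m) (Fin n) ℝ, (∀ i j, Q i j * Q i j = C i j) ∧ Q.rank ≤ 3 := by
  obtain ⟨B, F, hF⟩ := exists_isPsdFactorization_psdRank hCnonneg
  have hk : Fintype.card (Fin (PsdRank C)) ≤ 3 := (Fintype.card_fin _).trans_le hpsd
  choose u hu using fun j => (hF.posSemidef_right j).exists_eq_vecMulVec_self_of_rank_le_one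
    (by have := hF.rank_add_two_le_of_sqrtCondOneSide hS.1 hC j; omega)
  choose w hw using fun i => (hF.posSemidef_left i).exists_eq_vecMulVec_self_of_rank_le_one
    (by have := hF.transpose.rank_add_two_le_of_sqrtCondOneSide hS.2 hC.transpose i; omega)
  refine ⟨of w * (of u)ᵀ, fun i j => ?_, ?_⟩
  · rw [hF.apply_eq, hw, hu, trace_vecMulVec_self_mul_vecMulVec_self]
    rfl
  · calc (of w * (of u)ᵀ).rank ≤ (of w).rank := rank_mul_le_left _ _
      _ ≤ Fintype.card (Fin (PsdRank C)) := rank_le_card_width _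
      _ ≤ 3 := hk
end

section
/- Let S ∈ ℝ^{n×n}, b ∈ ℝ^{n×1}, c ∈ ℝ^{1×n} be nonnegative and N a positive integer. Form the (n+3)×(n+3) matrix G with top-left block S, the vector b as the last column of the S-block rows (followed by zeros), the row (c, N, N, N), and two final rows (0,…,0,N,N,0) and (0,…,0,N,0,N). If PSD rank(G) ≤ r + 2, then there exists x ≥ 0 such that the (n+1)×(n+1) matrix A(x) = [[S, b],[c, x]] has PSD rank at most r. -/
/-!
Take a PSD factorization `G i j = tr (B i * C j)` of size `k ≤ r + 2`. A zero entry of `G` forces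
the product of the two PSD factors to vanish, not just its trace, so the two "private" gadget
rows and columns (the `N · I₂` block) yield vectors `w₁, w₂` in the ranges of their column
factors and dual functionals `q₁, q₂` with `qₛ wₜ = δₛₜ`, while every `S`-row factor kills the
`wₜ` and every `S`-column factor is killed by the `qₛ`. The oblique projection
`P = 1 - ∑ₜ wₜ qₜ` has rank `≤ k - 2 ≤ r` and fixes all `S`-factors, so compressing the remaining
factors through a rank factorization `P = X * Y` (`B ↦ Xᴴ B X`, `C ↦ Y C Yᴴ`) reproduces `S`,
`b` and `c` in size `r`; the corner entry becomes whatever value `x` the compression produces.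
-/

open Matrix

namespace Matrix

variable {K : Type*} [Field K]

theorem exists_rank_factorization {m n : Type*} [Fintype n] [DecidableEq n] (P : Matrix m n K) :
    ∃ (X : Matrix m (Fin P.rank) K) (Y : Matrix (Fin P.rank) n K), P = X * Y := by
  let e : LinearMap.range P.mulVecLin ≃ₗ[K] (Fin P.rank → K) :=
    LinearEquiv.ofFinrankEq _ _ (by rw [Module.finrank_fin_fun]; rfl)
  refine ⟨LinearMap.toMatrix' ((LinearMap.range P.mulVecLin).subtype ∘ₗ e.symm.toLinearMap),
    LinearMap.toMatrix' (e.toLinearMap ∘ₗ P.mulVecLin.rangeRestrict), ?_⟩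
  rw [← LinearMap.toMatrix'_comp, LinearMap.comp_assoc, ← LinearMap.comp_assoc _ e.toLinearMap,
    LinearEquiv.symm_comp, LinearMap.id_comp]
  exact (LinearMap.toMatrix'_toLin' P).symm

variable {κ μ : Type*} [Fintype κ] [DecidableEq κ] [DecidableEq μ]

theorem exists_dotProduct_mul_mulVec_eq_ite (B C : μ → Matrix κ κ K)
    (hdiag : ∀ t, B t * C t ≠ 0) (hoff : ∀ s t, s ≠ t → B s * C t = 0) :
    ∃ y z : μ → κ → K, ∀ s t, y s ⬝ᵥ (B s * C t) *ᵥ z t = if s = t then 1 else 0 := by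
  have hentry : ∀ t, ∃ a b, (B t * C t) a b ≠ 0 := fun t => by
    by_contra! h
    exact hdiag t (Matrix.ext h)
  choose a b hab using hentry
  refine ⟨fun t => Pi.single (a t) ((B t * C t) (a t) (b t))⁻¹, fun t => Pi.single (b t) 1,
    fun s t => ?_⟩
  split_ifs with hst
  · subst hst
    simp [mulVec_single, hab]
  · rw [hoff s t hst, zero_mulVec, dotProduct_zero]

variable [Fintype μ]

theorem rank_one_sub_mul_add_card_le {W : Matrix κ μ K} {Q : Matrix μ κ K} (h : Q * W = 1) :
    (1 - W * Q).rank + Fintype.card μ ≤ Fintype.card κ := by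
  have hPW : (1 - W * Q) * W = 0 := by
    rw [Matrix.sub_mul, Matrix.one_mul, Matrix.mul_assoc, h, Matrix.mul_one, sub_self]
  calc (1 - W * Q).rank + Fintype.card μ = (1 - W * Q).rank + (Q * W).rank := by
        rw [h, rank_one]
    _ ≤ (1 - W * Q).rank + W.rank := by gcongr; exact rank_mul_le_right Q W
    _ ≤ Fintype.card κ := rank_add_rank_le_card_of_mul_eq_zero hPW

theorem exists_rank_add_card_le_fixing {ι ι' : Type*} {Bg Cg : μ → Matrix κ κ K}
    (hdiag : ∀ t, Bg t * Cg t ≠ 0) (hoff : ∀ s t, s ≠ t → Bg s * Cg t = 0)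
    {B : ι → Matrix κ κ K} {C : ι' → Matrix κ κ K}
    (hB : ∀ i t, B i * Cg t = 0) (hC : ∀ s j, Bg s * C j = 0) :
    ∃ P : Matrix κ κ K, P.rank + Fintype.card μ ≤ Fintype.card κ ∧
      (∀ i, B i * P = B i) ∧ ∀ j, P * C j = C j := by
  obtain ⟨y, z, hyz⟩ := exists_dotProduct_mul_mulVec_eq_ite Bg Cg hdiag hoff
  let W : Matrix κ μ K := (of fun t => Cg t *ᵥ z t)ᵀ
  let Q : Matrix μ κ K := of fun s => y s ᵥ* Bg s
  have hQW : Q * W = 1 := by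
    ext s t
    change (y s ᵥ* Bg s) ⬝ᵥ (Cg t *ᵥ z t) = _
    rw [← dotProduct_mulVec, mulVec_mulVec, hyz, one_apply]
  have hBW : ∀ i, B i * W = 0 := fun i => by
    ext a t
    change (B i *ᵥ (Cg t *ᵥ z t)) a = 0
    rw [mulVec_mulVec, hB, zero_mulVec, Pi.zero_apply]
  have hQC : ∀ j, Q * C j = 0 := fun j => by
    ext s a
    change (y s ᵥ* Bg s ᵥ* C j) a = 0
    rw [vecMul_vecMul, hC, vecMul_zero, Pi.zero_apply]
  refine ⟨1 - W * Q, rank_one_sub_mul_add_card_le hQW, fun i => ?_, fun j => ?_⟩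
  · rw [Matrix.mul_sub, Matrix.mul_one, ← Matrix.mul_assoc, hBW, Matrix.zero_mul, sub_zero]
  · rw [Matrix.sub_mul, Matrix.one_mul, Matrix.mul_assoc, hQC, Matrix.mul_zero, sub_zero]

end Matrix

namespace Matrix.PosSemidef

variable {m : Type*} [Fintype m] [DecidableEq m] {B C : Matrix m m ℝ}

theorem exists_mul_eq_and_trace_mul_eq (hB : B.PosSemidef) (hC : C.PosSemidef) :
    ∃ R T : Matrix m m ℝ, B * C = Rᴴ * (R * Tᴴ) * T ∧
      (B * C).trace = ((R * Tᴴ)ᴴ * (R * Tᴴ)).trace := by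
  open scoped MatrixOrder in
  obtain ⟨R, rfl⟩ := CStarAlgebra.nonneg_iff_eq_star_mul_self.mp hB.nonneg
  open scoped MatrixOrder in
  obtain ⟨T, rfl⟩ := CStarAlgebra.nonneg_iff_eq_star_mul_self.mp hC.nonneg
  refine ⟨R, T, by simp [star_eq_conjTranspose, Matrix.mul_assoc], ?_⟩
  simp only [star_eq_conjTranspose, conjTranspose_mul, conjTranspose_conjTranspose]
  rw [← Matrix.mul_assoc, trace_mul_comm]
  simp only [Matrix.mul_assoc]

theorem trace_mul_nonneg (hB : B.PosSemidef) (hC : C.PosSemidef) : 0 ≤ (B * C).trace := by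
  obtain ⟨R, T, -, htr⟩ := exists_mul_eq_and_trace_mul_eq hB hC
  exact htr ▸ (posSemidef_conjTranspose_mul_self _).trace_nonneg

theorem mul_eq_zero_of_trace_mul_eq_zero_s16 (hB : B.PosSemidef) (hC : C.PosSemidef)
    (h : (B * C).trace = 0) : B * C = 0 := by
  obtain ⟨R, T, hBC, htr⟩ := exists_mul_eq_and_trace_mul_eq hB hC
  rw [htr, trace_conjTranspose_mul_self_eq_zero_iff] at h
  rw [hBC, h, Matrix.mul_zero, Matrix.zero_mul]

end Matrix.PosSemidef

def HasPsdFactorization {α β : Type} [Fintype α] [Fintype β] (A : Matrix α β ℝ) (k : ℕ) : Prop :=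
  ∃ (B : α → Matrix (Fin k) (Fin k) ℝ) (C : β → Matrix (Fin k) (Fin k) ℝ),
    (∀ i, (B i).PosSemidef) ∧ (∀ j, (C j).PosSemidef) ∧ ∀ i j, A i j = ((B i) * (C j)).trace

section PsdFactorization

variable {α β : Type} [Fintype α] [Fintype β] {A : Matrix α β ℝ}

theorem HasPsdFactorization.psdRank_le {k : ℕ} (h : HasPsdFactorization A k) : PsdRank A ≤ k :=
  Nat.sInf_le h

theorem hasPsdFactorization_card_of_nonneg (hA : ∀ i j, 0 ≤ A i j) :
    HasPsdFactorization A (Fintype.card β) := by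
  classical
  let e := Fintype.equivFin β
  refine ⟨fun i => diagonal fun t => A i (e.symm t), fun j => diagonal (Pi.single (e j) 1),
    fun i => posSemidef_diagonal_iff.mpr fun t => hA i _, fun j => ?_, fun i j => ?_⟩
  · refine posSemidef_diagonal_iff.mpr fun t => ?_
    rw [Pi.single_apply]
    split_ifs <;> norm_num
  · simp [diagonal_mul_diagonal, trace_diagonal, Pi.single_apply, e]

-- Without nonnegativity the defining set can be empty and `PsdRank A = 0` is a junk value.
theorem hasPsdFactorization_psdRank (hA : ∀ i j, 0 ≤ A i j) :
    HasPsdFactorization A (PsdRank A) :=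
  Nat.sInf_mem (s := {k | HasPsdFactorization A k}) ⟨_, hasPsdFactorization_card_of_nonneg hA⟩

theorem psdRank_trace_conj_le_rank {k : ℕ} {B : α → Matrix (Fin k) (Fin k) ℝ}
    {C : β → Matrix (Fin k) (Fin k) ℝ} (hB : ∀ i, (B i).PosSemidef) (hC : ∀ j, (C j).PosSemidef)
    (P : Matrix (Fin k) (Fin k) ℝ) :
    PsdRank (of fun i j => (B i * P * C j * Pᴴ).trace) ≤ P.rank := by
  obtain ⟨X, Y, hXY⟩ := exists_rank_factorization P
  revert X Y
  generalize P.rank = ρ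
  rintro X Y rfl
  refine HasPsdFactorization.psdRank_le ⟨fun i => Xᴴ * B i * X, fun j => Y * C j * Yᴴ,
    fun i => (hB i).conjTranspose_mul_mul_same X, fun j => ?_, fun i j => ?_⟩
  · simpa using (hC j).conjTranspose_mul_mul_same Yᴴ
  · simp only [of_apply, conjTranspose_mul, Matrix.mul_assoc]
    rw [trace_mul_comm Xᴴ]
    simp only [Matrix.mul_assoc]

end PsdFactorization

theorem exists_psdRank_fromBlocks_le_rank {ι : Type} [Fintype ι] {k : ℕ} {S : Matrix ι ι ℝ}
    {b c : ι → ℝ} {B C : ι ⊕ Fin 1 → Matrix (Fin k) (Fin k) ℝ}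
    (hB : ∀ i, (B i).PosSemidef) (hC : ∀ j, (C j).PosSemidef)
    (hS : ∀ i j, S i j = (B (.inl i) * C (.inl j)).trace)
    (hb : ∀ i, b i = (B (.inl i) * C (.inr 0)).trace)
    (hc : ∀ j, c j = (B (.inr 0) * C (.inl j)).trace) {P : Matrix (Fin k) (Fin k) ℝ}
    (hBP : ∀ i, B (.inl i) * P = B (.inl i)) (hPC : ∀ j, P * C (.inl j) = C (.inl j)) :
    ∃ x : ℝ, 0 ≤ x ∧ PsdRank (fromBlocks S (of fun i (_ : Fin 1) => b i)
      (of fun (_ : Fin 1) j => c j) !![x]) ≤ P.rank := by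
  have hPB : ∀ i, Pᴴ * B (.inl i) = B (.inl i) := fun i => by
    conv_lhs => rw [← (hB (.inl i)).isHermitian.eq]
    rw [← conjTranspose_mul, hBP, (hB (.inl i)).isHermitian.eq]
  have hCP : ∀ j, C (.inl j) * Pᴴ = C (.inl j) := fun j => by
    conv_lhs => rw [← (hC (.inl j)).isHermitian.eq]
    rw [← conjTranspose_mul, hPC, (hC (.inl j)).isHermitian.eq]
  refine ⟨(B (.inr 0) * P * C (.inr 0) * Pᴴ).trace, ?_, ?_⟩
  · rw [trace_mul_comm, ← Matrix.mul_assoc, ← Matrix.mul_assoc]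
    exact ((hB _).conjTranspose_mul_mul_same P).trace_mul_nonneg (hC _)
  · convert psdRank_trace_conj_le_rank hB hC P using 2
    ext (i | i) (j | j)
    · rw [fromBlocks_apply₁₁, of_apply, hBP, Matrix.mul_assoc, hCP, hS]
    · rw [fromBlocks_apply₁₂, of_apply, of_apply, hBP, trace_mul_comm, ← Matrix.mul_assoc, hPB,
        Fin.fin_one_eq_zero j, hb]
    · rw [fromBlocks_apply₂₁, of_apply, of_apply, Matrix.mul_assoc _ P, hPC, Matrix.mul_assoc,
        hCP, Fin.fin_one_eq_zero i, hc]
    · rw [Fin.fin_one_eq_zero i, Fin.fin_one_eq_zero j]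
      rfl

theorem completion_from_gadget {n : ℕ} (S : Matrix (Fin n) (Fin n) ℝ)
    (b : Fin n → ℝ) (c : Fin n → ℝ) (N : ℕ) (hN : 0 < N) (r : ℕ)
    (hS : ∀ i j, 0 ≤ S i j) (hb : ∀ i, 0 ≤ b i) (hc : ∀ j, 0 ≤ c j)
    (hG : PsdRank (Matrix.fromBlocks S
        (Matrix.of fun i (j : Fin 3) => if j = 0 then b i else 0)
        (Matrix.of fun (i : Fin 3) j => if i = 0 then c j else 0)
        !![(N : ℝ), N, N; N, N, 0; N, 0, N]) ≤ r + 2) :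
    ∃ x : ℝ, 0 ≤ x ∧
      PsdRank (Matrix.fromBlocks S
        (Matrix.of fun i (_ : Fin 1) => b i)
        (Matrix.of fun (_ : Fin 1) j => c j)
        !![x]) ≤ r := by
  set G := fromBlocks S (of fun i (j : Fin 3) => if j = 0 then b i else 0)
    (of fun (i : Fin 3) j => if i = 0 then c j else 0) !![(N : ℝ), N, N; N, N, 0; N, 0, N]
  have hG_nonneg : ∀ i j, 0 ≤ G i j := by
    rintro (i | i) (j | j)
    · exact hS i j
    · simp only [G, fromBlocks_apply₁₂, of_apply]
      split_ifs <;> simp [hb]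
    · simp only [G, fromBlocks_apply₂₁, of_apply]
      split_ifs <;> simp [hc]
    · fin_cases i <;> fin_cases j <;> simp [G]
  obtain ⟨B, C, hB, hC, hBC⟩ := hasPsdFactorization_psdRank hG_nonneg
  have hzero : ∀ i j, G i j = 0 → B i * C j = 0 := fun i j h =>
    (hB i).mul_eq_zero_of_trace_mul_eq_zero_s16 (hC j) (hBC i j ▸ h)
  -- `t.succ` for `t : Fin 2` indexes the `N · I₂` block in the last two rows and columns.
  obtain ⟨P, hP, hBP, hPC⟩ := exists_rank_add_card_le_fixing
    (Bg := fun t : Fin 2 => B (.inr t.succ)) (Cg := fun t => C (.inr t.succ))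
    (B := fun i => B (.inl i)) (C := fun j => C (.inl j))
    (fun t h => by
      have := hBC (.inr t.succ) (.inr t.succ)
      rw [h, trace_zero] at this
      fin_cases t <;> simp [G, hN.ne'] at this)
    (fun s t hst => hzero _ _ (by fin_cases s <;> fin_cases t <;> simp_all [G]))
    (fun i t => hzero _ _ (by simp [G]))
    (fun s j => hzero _ _ (by simp [G]))
  obtain ⟨x, hx, hrank⟩ := exists_psdRank_fromBlocks_le_rank
    (B := B ∘ Sum.map id fun _ => 0) (C := C ∘ Sum.map id fun _ => 0)
    (fun _ => hB _) (fun _ => hC _) (fun i j => hBC (.inl i) (.inl j))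
    (fun i => by simpa [G] using hBC (.inl i) (.inr 0))
    (fun j => by simpa [G] using hBC (.inr 0) (.inl j)) hBP hPC
  refine ⟨x, hx, hrank.trans ?_⟩
  simp only [Fintype.card_fin] at hP
  omega
end
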